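/- arXiv:2303.03258 — 5 statements merged into one kernel-verified Lean document; each statement's English description precedes it below -/
import Mathlib

section
/- For a family of light rays emitted from a point source at distance d > 1 from the center of the unit circle and reflected off the circle according to the law of reflection, the reflected rays have an envelope (caustic) that lies entirely inside the unit circle. Concretely: parametrize the reflection point as P(θ) = (cos θ, sin θ); the reflected ray direction is obtained from the incident direction by reflecting across the tangent line at P(θ); then every point of the envelope of this family of lines has norm strictly less than 1. -/
open Real

/-!
Writing `c = cos θ`, `s = sin θ` and `t = d c`, the reflected direction is
`((2t - 1)c - d, (2t - 1)s)`; solving the line equation together with its `θ`-derivative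
gives the envelope point
`x = (2 c d² s² + d (t - 1), 2 d² s³) / (2 d² - 3 t + 1)`.
Admissibility of the ray is `t > 1`, and
`(2 d² - 3 t + 1)² - |numerator|² = (t - 1)² (3 d² - 4 t + 1)`,
which is positive because `t² ≤ d²` gives `3 d² - 4 t + 1 ≥ (3 t - 1)(t - 1) > 0`.
-/

/-- The line function `F φ x`, with the reflected direction simplified by `sin² φ + cos² φ = 1`. -/
noncomputable def reflectedLine (d : ℝ) (x : ℝ × ℝ) (φ : ℝ) : ℝ :=
  (x.1 - cos φ) * ((2 * d * cos φ - 1) * sin φ) - (x.2 - sin φ) * (2 * d * cos φ ^ 2 - cos φ - d)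

theorem hasDerivAt_reflectedLine (d : ℝ) (x : ℝ × ℝ) (φ : ℝ) :
    HasDerivAt (reflectedLine d x)
      ((2 * d * cos φ - 1) * sin φ ^ 2
        + (x.1 - cos φ) * ((2 * d * cos φ - 1) * cos φ - 2 * d * sin φ ^ 2)
        + cos φ * (2 * d * cos φ ^ 2 - cos φ - d)
        + (x.2 - sin φ) * ((4 * d * cos φ - 1) * sin φ)) φ := by
  have hcos := hasDerivAt_cos φ
  have hsin := hasDerivAt_sin φ
  have H := (((hasDerivAt_const φ x.1).sub hcos).mul
      ((((hasDerivAt_const φ (2 * d)).mul hcos).sub_const 1).mul hsin)).sub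
    (((hasDerivAt_const φ x.2).sub hsin).mul
      ((((hasDerivAt_const φ (2 * d)).mul (hcos.pow 2)).sub hcos).sub_const d))
  refine H.congr_deriv ?_
  simp only [Pi.sub_apply, Pi.mul_apply, Pi.pow_apply]
  ring

section EnvelopeAlgebra

variable {c s d x₁ x₂ : ℝ}

theorem envelope_coords (hcs : s ^ 2 + c ^ 2 = 1)
    (hline : (x₁ - c) * ((2 * d * c - 1) * s) - (x₂ - s) * (2 * d * c ^ 2 - c - d) = 0)
    (hderiv : (2 * d * c - 1) * s ^ 2 + (x₁ - c) * ((2 * d * c - 1) * c - 2 * d * s ^ 2)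
        + c * (2 * d * c ^ 2 - c - d) + (x₂ - s) * ((4 * d * c - 1) * s) = 0) :
    x₁ * (2 * d ^ 2 - 3 * (d * c) + 1) = 2 * c * d ^ 2 * s ^ 2 + d * (d * c - 1) ∧
      x₂ * (2 * d ^ 2 - 3 * (d * c) + 1) = 2 * d ^ 2 * s ^ 3 := by
  constructor
  · linear_combination (s * (4 * d * c - 1)) * hline + (2 * d * c ^ 2 - c - d) * hderiv +
      (2 * d ^ 2 * c - 4 * d ^ 2 * c ^ 2 * x₁ + 4 * d * c * x₁ - x₁ - d - 2 * d ^ 2 * x₁) * hcs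
  · linear_combination (-(2 * (2 * d * c ^ 2 - c - d) + c)) * hline + (s * (2 * d * c - 1)) * hderiv +
      (-2 * d ^ 2 * s + 4 * d ^ 2 * c * s * x₁ + 6 * d * c * x₂ - 8 * d ^ 2 * c ^ 2 * x₂
        - 2 * d * s * x₁ - x₂) * hcs

theorem envelope_numerator_sq_lt (hcs : s ^ 2 + c ^ 2 = 1) (hdc : 1 < d * c) :
    (2 * c * d ^ 2 * s ^ 2 + d * (d * c - 1)) ^ 2 + (2 * d ^ 2 * s ^ 3) ^ 2
      < (2 * d ^ 2 - 3 * (d * c) + 1) ^ 2 := by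
  have hgap : (2 * d ^ 2 - 3 * (d * c) + 1) ^ 2
      - ((2 * c * d ^ 2 * s ^ 2 + d * (d * c - 1)) ^ 2 + (2 * d ^ 2 * s ^ 3) ^ 2)
      = (d * c - 1) ^ 2 * (3 * d ^ 2 - 4 * (d * c) + 1) := by
    linear_combination (4 * d ^ 3 * c - 4 * d ^ 4 - 4 * d ^ 4 * s ^ 2 - 4 * d ^ 4 * s ^ 4) * hcs
  have hdc_sq : (d * c) ^ 2 ≤ d ^ 2 := by nlinarith [sq_nonneg (d * s)]
  have hfactor : 0 < 3 * d ^ 2 - 4 * (d * c) + 1 := by nlinarith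
  nlinarith [mul_pos (pow_pos (sub_pos.2 hdc) 2) hfactor]

theorem sq_add_sq_lt_one_of_envelope (hcs : s ^ 2 + c ^ 2 = 1) (hdc : 1 < d * c)
    (hline : (x₁ - c) * ((2 * d * c - 1) * s) - (x₂ - s) * (2 * d * c ^ 2 - c - d) = 0)
    (hderiv : (2 * d * c - 1) * s ^ 2 + (x₁ - c) * ((2 * d * c - 1) * c - 2 * d * s ^ 2)
        + c * (2 * d * c ^ 2 - c - d) + (x₂ - s) * ((4 * d * c - 1) * s) = 0) :
    x₁ ^ 2 + x₂ ^ 2 < 1 := by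
  set D := 2 * d ^ 2 - 3 * (d * c) + 1
  obtain ⟨h₁, h₂⟩ := envelope_coords hcs hline hderiv
  have hD : 0 < D := by nlinarith [sq_nonneg (d * s)]
  have : (x₁ ^ 2 + x₂ ^ 2) * D ^ 2 < 1 * D ^ 2 := by
    calc (x₁ ^ 2 + x₂ ^ 2) * D ^ 2 = (x₁ * D) ^ 2 + (x₂ * D) ^ 2 := by ring
      _ < D ^ 2 := by rw [h₁, h₂]; exact envelope_numerator_sq_lt hcs hdc
      _ = 1 * D ^ 2 := (one_mul _).symm
  exact lt_of_mul_lt_mul_right this (sq_nonneg D)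

end EnvelopeAlgebra

theorem caustic_inside_unit_circle_general
    (d : ℝ)
    (S : ℝ × ℝ) (hS : S = (d, 0))
    (P v r : ℝ → ℝ × ℝ)
    (hP : ∀ θ, P θ = (cos θ, sin θ))
    (hv : ∀ θ, v θ = P θ - S)
    (hr : ∀ θ, r θ = v θ - (2 * ((v θ).1 * (P θ).1 + (v θ).2 * (P θ).2)) • P θ)
    (F : ℝ → ℝ × ℝ → ℝ)
    (hF : ∀ θ x, F θ x = (x.1 - (P θ).1) * (r θ).2 - (x.2 - (P θ).2) * (r θ).1)
    (θ : ℝ)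
    (hadm : 0 < (S - P θ).1 * (P θ).1 + (S - P θ).2 * (P θ).2)
    (x : ℝ × ℝ)
    (hx : F θ x = 0)
    (hx' : deriv (fun φ => F φ x) θ = 0) :
    x.1 ^ 2 + x.2 ^ 2 < 1 := by
  have hpyth := sin_sq_add_cos_sq θ
  have hF_eq : (fun φ => F φ x) = reflectedLine d x := by
    funext φ
    simp only [hF, hr, hv, hP, hS, reflectedLine, Prod.fst_sub, Prod.snd_sub, Prod.smul_fst,
      Prod.smul_snd, smul_eq_mul]
    linear_combination (-2 * (x.1 * sin φ - cos φ * x.2)) * sin_sq_add_cos_sq φ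
  have hdc : 1 < d * cos θ := by
    simp only [hP, hS, Prod.fst_sub, Prod.snd_sub] at hadm
    nlinarith
  have hline : reflectedLine d x θ = 0 := congrFun hF_eq θ ▸ hx
  rw [hF_eq, (hasDerivAt_reflectedLine d x θ).deriv] at hx'
  exact sq_add_sq_lt_one_of_envelope hpyth hdc hline hx'

/-- The envelope (caustic) of the family of rays emitted from a point source
`S = (d, 0)` with `d > 1` and reflected off the unit circle lies strictly
inside the unit circle.  The reflection point is `P θ = (cos θ, sin θ)`, the
reflected direction is obtained by the law of reflection
`v' = v - 2⟨v, n⟩ n` with unit normal `n = P θ`, the line is encoded by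
`F θ x = 0`, and the envelope consists of the points satisfying the line
equation together with its `θ`-derivative. -/
theorem caustic_inside_unit_circle
    (d : ℝ) (hd : 1 < d)
    (S : ℝ × ℝ) (hS : S = (d, 0))
    (P v r : ℝ → ℝ × ℝ)
    (hP : ∀ θ, P θ = (cos θ, sin θ))
    (hv : ∀ θ, v θ = P θ - S)
    (hr : ∀ θ, r θ = v θ - (2 * ((v θ).1 * (P θ).1 + (v θ).2 * (P θ).2)) • P θ)
    (F : ℝ → ℝ × ℝ → ℝ)
    (hF : ∀ θ x, F θ x = (x.1 - (P θ).1) * (r θ).2 - (x.2 - (P θ).2) * (r θ).1)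
    (θ : ℝ)
    (hadm : 0 < (S - P θ).1 * (P θ).1 + (S - P θ).2 * (P θ).2)
    (x : ℝ × ℝ)
    (hx : F θ x = 0)
    (hx' : deriv (fun φ => F φ x) θ = 0) :
    x.1 ^ 2 + x.2 ^ 2 < 1 :=
  caustic_inside_unit_circle_general d S hS P v r hP hv hr F hF θ hadm x hx hx'
end

section
/- Concentration of rays at the caustic: if D : (0, π/2) → ℝ is continuously differentiable with a unique interior critical point i* which is a nondegenerate minimum, then for incidence angles uniformly distributed, the density of outgoing deviation angles diverges at D(i*): for any sequence of angles δₖ → D(i*)+ with δₖ > D(i*), the measure of {i : D(i) ≤ δₖ} behaves like C·√(δₖ − D(i*)) for some C > 0; in particular the pushforward density (dδ-measure) is unbounded near D(i*). -/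
open Real MeasureTheory
open Set Filter Topology

/-!
Near the nondegenerate minimum, `D i - D i* ~ D''(i*) / 2 · (i - i*)²` (L'Hôpital), and since `i*`
is the only critical point, `D` decreases on `(0, i*]` and increases on `[i*, π/2)`. So for small
`ε` the sublevel set is an interval `[a ε, b ε]` whose endpoints solve `D = D i* + ε`; plugging them
into the quadratic asymptotics gives `b ε - i* ~ i* - a ε ~ √(2 ε / D''(i*))`, so the measure of
the sublevel set is asymptotic to `2 √(2 ε / D''(i*))`.
-/

theorem IsPreconnected.forall_pos_of_ne_zero {s : Set ℝ} (hs : IsPreconnected s) {g : ℝ → ℝ}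
    (hg : ContinuousOn g s) (hne : ∀ x ∈ s, g x ≠ 0) {p : ℝ} (hp : p ∈ s) (hgp : 0 < g p) :
    ∀ x ∈ s, 0 < g x := by
  intro x hx
  by_contra! hgx
  obtain ⟨c, hc, hgc⟩ := hs.intermediate_value hx hp hg ⟨hgx, hgp.le⟩
  exact hne c hc hgc

section CriticalPoint

variable {f : ℝ → ℝ} {x₀ k : ℝ}

theorem tendsto_div_sub_of_hasDerivAt {g : ℝ → ℝ} (hg : HasDerivAt g k x₀) (hg₀ : g x₀ = 0) :
    Tendsto (fun x => g x / (x - x₀)) (𝓝[≠] x₀) (𝓝 k) :=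
  (hasDerivAt_iff_tendsto_slope.1 hg).congr fun x => by simp [slope_def_field, hg₀]

theorem eventually_pos_nhdsGT_of_hasDerivAt {g : ℝ → ℝ} (hk : 0 < k) (hg : HasDerivAt g k x₀)
    (hg₀ : g x₀ = 0) : ∀ᶠ x in 𝓝[>] x₀, 0 < g x := by
  filter_upwards [((tendsto_div_sub_of_hasDerivAt hg hg₀).eventually
    (eventually_gt_nhds hk)).filter_mono (nhdsGT_le_nhdsNE x₀), self_mem_nhdsWithin]
    with x hpos hx
  exact (div_pos_iff_of_pos_right (sub_pos.2 hx)).1 hpos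

theorem eventually_neg_nhdsLT_of_hasDerivAt {g : ℝ → ℝ} (hk : 0 < k) (hg : HasDerivAt g k x₀)
    (hg₀ : g x₀ = 0) : ∀ᶠ x in 𝓝[<] x₀, g x < 0 := by
  filter_upwards [((tendsto_div_sub_of_hasDerivAt hg hg₀).eventually
    (eventually_gt_nhds hk)).filter_mono (nhdsLT_le_nhdsNE x₀), self_mem_nhdsWithin]
    with x hpos hx
  by_contra! hx'
  exact (div_nonpos_of_nonneg_of_nonpos hx' (sub_neg.2 hx).le).not_gt hpos

theorem tendsto_sub_div_sq_of_hasDerivAt_deriv (hf : Differentiable ℝ f)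
    (h : HasDerivAt (deriv f) k x₀) (hcrit : deriv f x₀ = 0) :
    Tendsto (fun x => (f x - f x₀) / (x - x₀) ^ 2) (𝓝[≠] x₀) (𝓝 (k / 2)) := by
  refine HasDerivAt.lhopital_zero_nhdsNE (f' := deriv f) (g' := fun x => 2 * (x - x₀))
    (.of_forall fun x => (hf x).hasDerivAt.sub_const _)
    (.of_forall fun x => by simpa using ((hasDerivAt_id x).sub_const x₀).fun_pow 2)
    (eventually_mem_nhdsWithin.mono fun x hx => by simpa [sub_eq_zero] using hx) ?_ ?_ ?_
  · exact tendsto_nhdsWithin_of_tendsto_nhds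
      (by simpa using (hf x₀).continuousAt.sub_const (f x₀))
  · exact tendsto_nhdsWithin_of_tendsto_nhds
      (by simpa using ((continuous_sub_right x₀).fun_pow 2).tendsto x₀)
  · simpa [div_mul_eq_div_div_swap] using (tendsto_div_sub_of_hasDerivAt h hcrit).div_const 2

theorem strictMonoOn_Ico_of_deriv_ne_zero {b : ℝ} (hk : 0 < k) (h : HasDerivAt (deriv f) k x₀)
    (hcrit : deriv f x₀ = 0) (hf : ContinuousOn f (Ico x₀ b))
    (hf' : ContinuousOn (deriv f) (Ioo x₀ b)) (hne : ∀ x ∈ Ioo x₀ b, deriv f x ≠ 0) :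
    StrictMonoOn f (Ico x₀ b) := by
  refine strictMonoOn_of_deriv_pos (convex_Ico x₀ b) hf ?_
  rw [interior_Ico]
  intro x hx
  obtain ⟨p, hpos, hp⟩ := ((eventually_pos_nhdsGT_of_hasDerivAt hk h hcrit).and
    (Ioo_mem_nhdsGT (hx.1.trans hx.2))).exists
  exact isPreconnected_Ioo.forall_pos_of_ne_zero hf' hne hp hpos x hx

theorem strictAntiOn_Ioc_of_deriv_ne_zero {a : ℝ} (hk : 0 < k) (h : HasDerivAt (deriv f) k x₀)
    (hcrit : deriv f x₀ = 0) (hf : ContinuousOn f (Ioc a x₀))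
    (hf' : ContinuousOn (deriv f) (Ioo a x₀)) (hne : ∀ x ∈ Ioo a x₀, deriv f x ≠ 0) :
    StrictAntiOn f (Ioc a x₀) := by
  refine strictAntiOn_of_deriv_neg (convex_Ioc a x₀) hf ?_
  rw [interior_Ioc]
  intro x hx
  obtain ⟨p, hneg, hp⟩ := ((eventually_neg_nhdsLT_of_hasDerivAt hk h hcrit).and
    (Ioo_mem_nhdsLT (hx.1.trans hx.2))).exists
  simpa using isPreconnected_Ioo.forall_pos_of_ne_zero hf'.neg
    (fun x hx => neg_ne_zero.2 (hne x hx)) hp (neg_pos.2 hneg) x hx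

end CriticalPoint

theorem measureReal_inter_Ioo_add_inter_Ioo {s : Set ℝ} (hs : MeasurableSet s) {a b c : ℝ}
    (hab : a < b) (hbc : b ≤ c) :
    volume.real (Ioo a b ∩ s) + volume.real (Ioo b c ∩ s) = volume.real (Ioo a c ∩ s) := by
  have hdisj : Disjoint (Ioo a b ∩ s) (Ico b c ∩ s) :=
    ((Iio_disjoint_Ici le_rfl).mono Ioo_subset_Iio_self Ico_subset_Ici_self).mono
      inter_subset_left inter_subset_left
  rw [measureReal_congr ((Ioo_ae_eq_Ico (a := b) (b := c)).inter (ae_eq_refl s)),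
    ← Ioo_union_Ico_eq_Ioo hab hbc, union_inter_distrib_right,
    measureReal_union hdisj (measurableSet_Ico.inter hs)
      (measure_inter_ne_top_of_left_ne_top measure_Ioo_lt_top.ne)
      (measure_inter_ne_top_of_left_ne_top measure_Ico_lt_top.ne)]

theorem StrictMonoOn.sep_Ioo_le_eq_Ioc {α β : Type*} [LinearOrder α] [Preorder β] {f : α → β}
    {a b y : α} (hf : StrictMonoOn f (Ioo a b)) (hy : y ∈ Ioo a b) :
    {x ∈ Ioo a b | f x ≤ f y} = Ioc a y := by
  ext x
  constructor
  · rintro ⟨hx, hxy⟩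
    exact ⟨hx.1, (hf.le_iff_le hx hy).1 hxy⟩
  · rintro ⟨hax, hxy⟩
    have hx : x ∈ Ioo a b := ⟨hax, hxy.trans_lt hy.2⟩
    exact ⟨hx, (hf.le_iff_le hx hy).2 hxy⟩

section Sublevel

variable {f : ℝ → ℝ} {x₀ r c : ℝ}

theorem StrictMonoOn.exists_tendsto_inverse_nhdsGT (hr : x₀ < r)
    (hmono : StrictMonoOn f (Ico x₀ r)) (hcont : ContinuousOn f (Ico x₀ r)) :
    ∃ g : ℝ → ℝ, Tendsto g (𝓝[>] 0) (𝓝[>] x₀) ∧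
      ∀ᶠ ε in 𝓝[>] 0, g ε ∈ Ioo x₀ r ∧ f (g ε) = f x₀ + ε := by
  obtain ⟨y, hx₀y, hyr⟩ := exists_between hr
  have hfy : f x₀ < f y := hmono (left_mem_Ico.2 hr) ⟨hx₀y.le, hyr⟩ hx₀y
  have hivt : ∀ ε ∈ Ioo 0 (f y - f x₀), ∃ x ∈ Ioo x₀ y, f x = f x₀ + ε := fun ε hε =>
    intermediate_value_Ioo hx₀y.le (hcont.mono (Icc_subset_Ico_right hyr))
      ⟨by linarith [hε.1], by linarith [hε.2]⟩
  choose! g hg hgf using hivt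
  have hsmall : ∀ᶠ ε in 𝓝[>] 0, ε ∈ Ioo 0 (f y - f x₀) := Ioo_mem_nhdsGT (sub_pos.2 hfy)
  have hgmem : ∀ ε ∈ Ioo 0 (f y - f x₀), g ε ∈ Ico x₀ r := fun ε hε =>
    ⟨(hg ε hε).1.le, (hg ε hε).2.trans hyr⟩
  refine ⟨g, tendsto_nhdsWithin_iff.2 ⟨tendsto_order.2 ⟨fun a ha => ?_, fun a ha => ?_⟩,
    hsmall.mono fun ε hε => (hg ε hε).1⟩,
    hsmall.mono fun ε hε => ⟨⟨(hg ε hε).1, (hg ε hε).2.trans hyr⟩, hgf ε hε⟩⟩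
  · exact hsmall.mono fun ε hε => ha.trans (hg ε hε).1
  · obtain ⟨z, hx₀z, hz⟩ := exists_between (lt_min ha hx₀y)
    have hzmem : z ∈ Ico x₀ r := ⟨hx₀z.le, (hz.trans_le (min_le_right a y)).trans hyr⟩
    have hfz : f x₀ < f z := hmono (left_mem_Ico.2 hr) hzmem hx₀z
    filter_upwards [hsmall, Ioo_mem_nhdsGT (sub_pos.2 hfz)] with ε hε hεz
    have hlt : f (g ε) < f z := by linarith [hgf ε hε, hεz.2]
    exact ((hmono.lt_iff_lt (hgmem ε hε) hzmem).1 hlt).trans (hz.trans_le (min_le_left a y))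

theorem tendsto_volume_sublevel_div_sqrt_of_strictMonoOn (hr : x₀ < r)
    (hmono : StrictMonoOn f (Ico x₀ r)) (hcont : ContinuousOn f (Ico x₀ r)) (hc : 0 < c)
    (hlim : Tendsto (fun x => (f x - f x₀) / (x - x₀) ^ 2) (𝓝[>] x₀) (𝓝 c)) :
    Tendsto (fun ε => volume.real {x ∈ Ioo x₀ r | f x ≤ f x₀ + ε} / √ε) (𝓝[>] 0) (𝓝 (√c)⁻¹) := by
  obtain ⟨g, hg, hgf⟩ := hmono.exists_tendsto_inverse_nhdsGT hr hcont
  have hratio : Tendsto (fun ε => (√(ε / (g ε - x₀) ^ 2))⁻¹) (𝓝[>] 0) (𝓝 (√c)⁻¹) := by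
    refine ((hlim.comp hg).sqrt.inv₀ (sqrt_pos.2 hc).ne').congr' ?_
    filter_upwards [hgf] with ε ⟨_, hε⟩
    simp [hε]
  refine hratio.congr' ?_
  filter_upwards [hgf] with ε ⟨hgε, hε⟩
  rw [← hε, (hmono.mono Ioo_subset_Ico_self).sep_Ioo_le_eq_Ioc hgε,
    volume_real_Ioc_of_le hgε.1.le, sqrt_div' _ (sq_nonneg _),
    sqrt_sq (sub_pos.2 hgε.1).le, inv_div]

theorem tendsto_volume_sublevel_div_sqrt_of_strictAntiOn {l : ℝ} (hl : l < x₀)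
    (hanti : StrictAntiOn f (Ioc l x₀)) (hcont : ContinuousOn f (Ioc l x₀)) (hc : 0 < c)
    (hlim : Tendsto (fun x => (f x - f x₀) / (x - x₀) ^ 2) (𝓝[<] x₀) (𝓝 c)) :
    Tendsto (fun ε => volume.real {x ∈ Ioo l x₀ | f x ≤ f x₀ + ε} / √ε) (𝓝[>] 0) (𝓝 (√c)⁻¹) := by
  have hmaps : MapsTo Neg.neg (Ico (-x₀) (-l)) (Ioc l x₀) := fun x hx =>
    ⟨by linarith [hx.2], by linarith [hx.1]⟩
  have hlim' : Tendsto (fun x => (f (-x) - f (-(-x₀))) / (x - -x₀) ^ 2) (𝓝[>] (-x₀)) (𝓝 c) :=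
    (hlim.comp tendsto_neg_nhdsGT_neg).congr fun x => by
      simp only [Function.comp, neg_neg]
      ring_nf
  refine (tendsto_volume_sublevel_div_sqrt_of_strictMonoOn (f := fun x => f (-x)) (neg_lt_neg hl)
    (fun x hx y hy hxy => hanti (hmaps hy) (hmaps hx) (neg_lt_neg hxy))
    (hcont.comp continuousOn_neg hmaps) hc hlim').congr fun ε => ?_
  have hneg : {x ∈ Ioo (-x₀) (-l) | f (-x) ≤ f (-(-x₀)) + ε} =
      -{x ∈ Ioo l x₀ | f x ≤ f x₀ + ε} := by
    ext x
    simp only [neg_neg, Set.mem_neg, Set.mem_ofPred_eq, mem_Ioo, neg_lt, lt_neg]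
    tauto
  rw [hneg, measureReal_def, Measure.measure_neg, ← measureReal_def]

end Sublevel

/-- Concentration of rays at the caustic: if `D` is `C²` on `ℝ` with a unique
critical point `i* ∈ (0, π/2)` which is nondegenerate (`D''(i*) > 0`), then
the Lebesgue measure of `{i ∈ (0, π/2) : D i ≤ D i* + ε}` behaves like
`C √ε` as `ε → 0⁺` for some constant `C > 0`; in particular the pushforward
density of deviation angles diverges at `D i*`. -/
theorem caustic_intensity_divergence
    (D : ℝ → ℝ) (hD : ContDiff ℝ 2 D)
    (istar : ℝ) (histar : istar ∈ Set.Ioo 0 (π / 2))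
    (hcrit : deriv D istar = 0)
    (hnondeg : 0 < deriv (deriv D) istar)
    (hunique : ∀ i ∈ Set.Ioo 0 (π / 2), i ≠ istar → deriv D i ≠ 0) :
    ∃ C > 0, Filter.Tendsto
      (fun ε : ℝ =>
        (volume {i ∈ Set.Ioo 0 (π / 2) | D i ≤ D istar + ε}).toReal /
          Real.sqrt ε)
      (nhdsWithin 0 (Set.Ioi 0)) (nhds C) := by
  obtain ⟨h0, hπ⟩ := histar
  set k := deriv (deriv D) istar
  have hD'' : HasDerivAt (deriv D) k istar := (hD.differentiable_deriv_two istar).hasDerivAt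
  have hDc : Continuous D := hD.continuous
  have hD'c : Continuous (deriv D) := hD.continuous_deriv (by norm_num)
  have hquad := tendsto_sub_div_sq_of_hasDerivAt_deriv (hD.differentiable (by norm_num)) hD'' hcrit
  have hanti : StrictAntiOn D (Ioc 0 istar) :=
    strictAntiOn_Ioc_of_deriv_ne_zero hnondeg hD'' hcrit hDc.continuousOn
      hD'c.continuousOn fun i hi => hunique i ⟨hi.1, hi.2.trans hπ⟩ hi.2.ne
  have hmono : StrictMonoOn D (Ico istar (π / 2)) :=
    strictMonoOn_Ico_of_deriv_ne_zero hnondeg hD'' hcrit hDc.continuousOn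
      hD'c.continuousOn fun i hi => hunique i ⟨h0.trans hi.1, hi.2⟩ hi.1.ne'
  have hleft := tendsto_volume_sublevel_div_sqrt_of_strictAntiOn h0 hanti
    hDc.continuousOn (half_pos hnondeg) (hquad.mono_left (nhdsLT_le_nhdsNE istar))
  have hright := tendsto_volume_sublevel_div_sqrt_of_strictMonoOn hπ hmono
    hDc.continuousOn (half_pos hnondeg) (hquad.mono_left (nhdsGT_le_nhdsNE istar))
  refine ⟨2 * (√(k / 2))⁻¹, by positivity, ?_⟩
  rw [two_mul]
  refine (hleft.add hright).congr fun ε => ?_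
  rw [← add_div]
  congr 1
  exact measureReal_inter_Ioo_add_inter_Ioo
    (measurableSet_le hDc.measurable measurable_const) h0 hπ.le
end

section
/- Upsloping pool floor: for an observer in air looking at a flat horizontal pool floor at depth h through a flat water surface (index n > 1), the apparent depth d_s(θ_a) = h tan θ_w / tan θ_a (with sin θ_a = n sin θ_w) is a strictly decreasing function of the viewing angle θ_a ∈ (0, π/2), and tends to 0 as θ_a → π/2. Hence points viewed at shallower angles (farther away) appear less deep: the flat floor appears to slope upward toward the horizon. -/
open Real

private lemma key_formula (n h θ : ℝ) (hn : 1 < n) (hθ : θ ∈ Set.Ioo 0 (π / 2)) :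
    h * tan (arcsin (sin θ / n)) / tan θ = h * cos θ / Real.sqrt (n ^ 2 - sin θ ^ 2) := by
  obtain ⟨hθ0, hθ2⟩ := hθ
  have hn0 : (0:ℝ) < n := by linarith
  have hs : 0 < sin θ := Real.sin_pos_of_pos_of_lt_pi hθ0 (by linarith [Real.pi_pos])
  have hc : 0 < cos θ := Real.cos_pos_of_mem_Ioo ⟨by linarith [Real.pi_pos], hθ2⟩
  have hs2 : sin θ ^ 2 < n ^ 2 := by
    nlinarith [Real.sin_sq_le_one θ]
  have hA : 0 < n ^ 2 - sin θ ^ 2 := by linarith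
  have hsq : (0:ℝ) < Real.sqrt (n ^ 2 - sin θ ^ 2) := Real.sqrt_pos.mpr hA
  have h1 : 1 - (sin θ / n) ^ 2 = (n ^ 2 - sin θ ^ 2) / n ^ 2 := by
    field_simp
  rw [Real.tan_arcsin, Real.tan_eq_sin_div_cos, h1,
    Real.sqrt_div (le_of_lt hA), Real.sqrt_sq (le_of_lt hn0)]
  field_simp

/-- Upsloping pool floor: for a flat floor at depth `h` under water of index
`n > 1`, the apparent (sagittal) depth
`d θa = h tan (arcsin (sin θa / n)) / tan θa` is strictly decreasing in the
viewing angle `θa ∈ (0, π/2)`, tends to `h / n` as `θa → 0⁺`, and tends to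
`0` as `θa → (π/2)⁻`: the flat floor appears to slope upward toward the
horizon. -/
theorem upsloping_pool_floor
    (n h : ℝ) (hn : 1 < n) (hh : 0 < h)
    (d : ℝ → ℝ)
    (hd : ∀ θa, d θa = h * tan (arcsin (sin θa / n)) / tan θa) :
    StrictAntiOn d (Set.Ioo 0 (π / 2)) ∧
    Filter.Tendsto d (nhdsWithin 0 (Set.Ioi 0)) (nhds (h / n)) ∧
    Filter.Tendsto d (nhdsWithin (π / 2) (Set.Iio (π / 2))) (nhds 0) := by
  have hn0 : (0:ℝ) < n := by linarith
  set f : ℝ → ℝ := fun θ => h * cos θ / Real.sqrt (n ^ 2 - sin θ ^ 2) with hf_def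
  have hAx : ∀ x : ℝ, 0 < n ^ 2 - sin x ^ 2 := fun x => by
    nlinarith [Real.sin_sq_le_one x]
  have hsqx : ∀ x : ℝ, 0 < Real.sqrt (n ^ 2 - sin x ^ 2) :=
    fun x => Real.sqrt_pos.mpr (hAx x)
  have hdf : ∀ θ ∈ Set.Ioo 0 (π / 2), d θ = f θ := fun θ hθ => by
    rw [hd θ]; exact key_formula n h θ hn hθ
  have hfc : Continuous f := by
    apply Continuous.div
    · exact continuous_const.mul Real.continuous_cos
    · exact Real.continuous_sqrt.comp (continuous_const.sub (Real.continuous_sin.pow 2))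
    · exact fun x => ne_of_gt (hsqx x)
  have hpi2 : 0 < π / 2 := by linarith [Real.pi_pos]
  refine ⟨?_, ?_, ?_⟩
  · intro a ha b hb hab
    rw [hdf a ha, hdf b hb]
    have hca : 0 < cos a := Real.cos_pos_of_mem_Ioo ⟨by linarith [ha.1, Real.pi_pos], ha.2⟩
    have hcb : 0 < cos b := Real.cos_pos_of_mem_Ioo ⟨by linarith [hb.1, Real.pi_pos], hb.2⟩
    have hcab : cos b < cos a := by
      apply Real.cos_lt_cos_of_nonneg_of_le_pi (le_of_lt ha.1) (by linarith [hb.2, Real.pi_pos]) hab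
    have hA := hAx a; have hB := hAx b
    have hsa := hsqx a; have hsb := hsqx b
    rw [div_lt_div_iff₀ hsb hsa]
    have hsq : (h * cos b * Real.sqrt (n ^ 2 - sin a ^ 2)) ^ 2 <
        (h * cos a * Real.sqrt (n ^ 2 - sin b ^ 2)) ^ 2 := by
      have e1 : Real.sqrt (n ^ 2 - sin a ^ 2) ^ 2 = n ^ 2 - sin a ^ 2 :=
        Real.sq_sqrt (le_of_lt hA)
      have e2 : Real.sqrt (n ^ 2 - sin b ^ 2) ^ 2 = n ^ 2 - sin b ^ 2 :=
        Real.sq_sqrt (le_of_lt hB)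
      have sa : sin a ^ 2 = 1 - cos a ^ 2 := by
        nlinarith [Real.sin_sq_add_cos_sq a]
      have sb : sin b ^ 2 = 1 - cos b ^ 2 := by
        nlinarith [Real.sin_sq_add_cos_sq b]
      have hc2 : cos b ^ 2 < cos a ^ 2 := by nlinarith
      have hn2 : (0:ℝ) < n ^ 2 - 1 := by nlinarith
      have key : (cos b) ^ 2 * (n ^ 2 - sin a ^ 2) < (cos a) ^ 2 * (n ^ 2 - sin b ^ 2) := by
        rw [sa, sb]
        nlinarith [mul_pos hn2 (sub_pos.mpr hc2)]
      have hh2 : (0:ℝ) < h ^ 2 := by positivity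
      have eL : (h * cos b * Real.sqrt (n ^ 2 - sin a ^ 2)) ^ 2 =
          h ^ 2 * ((cos b) ^ 2 * (n ^ 2 - sin a ^ 2)) := by
        rw [mul_pow, mul_pow, e1]; ring
      have eR : (h * cos a * Real.sqrt (n ^ 2 - sin b ^ 2)) ^ 2 =
          h ^ 2 * ((cos a) ^ 2 * (n ^ 2 - sin b ^ 2)) := by
        rw [mul_pow, mul_pow, e2]; ring
      rw [eL, eR]
      exact mul_lt_mul_of_pos_left key hh2
    have hL : 0 ≤ h * cos b * Real.sqrt (n ^ 2 - sin a ^ 2) := by positivity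
    have hR : 0 ≤ h * cos a * Real.sqrt (n ^ 2 - sin b ^ 2) := by positivity
    have := Real.sqrt_lt_sqrt (sq_nonneg _) hsq
    rwa [Real.sqrt_sq hL, Real.sqrt_sq hR] at this
  · have hmem : Set.Ioo 0 (π / 2) ∈ nhdsWithin (0:ℝ) (Set.Ioi 0) :=
      Ioo_mem_nhdsGT_of_mem ⟨le_refl _, hpi2⟩
    have heq : d =ᶠ[nhdsWithin (0:ℝ) (Set.Ioi 0)] f := by
      filter_upwards [hmem] with θ hθ using hdf θ hθ
    have hval : f 0 = h / n := by
      simp only [hf_def, Real.cos_zero, Real.sin_zero]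
      rw [show (0:ℝ)^2 = 0 by ring, sub_zero, Real.sqrt_sq (le_of_lt hn0), mul_one]
    have : Filter.Tendsto f (nhdsWithin 0 (Set.Ioi 0)) (nhds (h / n)) := by
      rw [← hval]
      exact (hfc.tendsto 0).mono_left nhdsWithin_le_nhds
    exact Filter.Tendsto.congr' heq.symm this
  · have hmem : Set.Ioo 0 (π / 2) ∈ nhdsWithin (π / 2 : ℝ) (Set.Iio (π / 2)) :=
      Ioo_mem_nhdsLT_of_mem ⟨hpi2, le_refl _⟩
    have heq : d =ᶠ[nhdsWithin (π / 2 : ℝ) (Set.Iio (π / 2))] f := by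
      filter_upwards [hmem] with θ hθ using hdf θ hθ
    have hval : f (π / 2) = 0 := by
      simp [hf_def]
    have : Filter.Tendsto f (nhdsWithin (π / 2) (Set.Iio (π / 2))) (nhds 0) := by
      rw [← hval]
      exact (hfc.tendsto (π / 2)).mono_left nhdsWithin_le_nhds
    exact Filter.Tendsto.congr' heq.symm this
end

section
/- Nonexistence of a common virtual image point for a curved mirror: for reflection in the unit circle in the plane, with a source S outside the circle, there is no single point S' such that all reflected rays' backward extensions pass through S'. (Hence, unlike the flat mirror, the cylinder presents a 'non-object'.) -/
open Real

private lemma line_eq_aux (d : ℝ) (q1 c s t : ℝ) (hs : s ≠ 0)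
    (hcs : c^2 + s^2 = 1)
    (h1 : q1 = c + t * ((c - d) - (2 * ((c - d) * c + s * s)) * c))
    (h2 : (0:ℝ) = s + t * (s - (2 * ((c - d) * c + s * s)) * s)) :
    q1 * (2 * d * c - 1) = d := by
  have h2' : s * (1 + t * (2*d*c - 1)) = 0 := by linear_combination -h2 + 2*t*s*hcs
  have ht : 1 + t * (2*d*c - 1) = 0 := by
    rcases mul_eq_zero.mp h2' with h | h
    · exact absurd h hs
    · exact h
  linear_combination (2*d*c-1)*h1 + ((c-d) - 2*((c-d)*c+s*s)*c)*ht + 2*c*hcs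

/-- Non-object: for reflection in the unit circle with a point source
`S = (d, 0)`, `d > 1`, there is no single point `q` through which the backward
extensions of all reflected rays pass: no `q` lies on the reflected line
`L θ = P θ + ℝ • r θ` for every admissible `θ`
(those with `⟨S - P θ, P θ⟩ > 0`). -/
theorem no_common_virtual_image_point
    (d : ℝ) (hd : 1 < d)
    (S : ℝ × ℝ) (hS : S = (d, 0))
    (P v r : ℝ → ℝ × ℝ)
    (hP : ∀ θ, P θ = (cos θ, sin θ))
    (hv : ∀ θ, v θ = P θ - S)
    (hr : ∀ θ, r θ = v θ - (2 * ((v θ).1 * (P θ).1 + (v θ).2 * (P θ).2)) • P θ) :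
    ¬ ∃ q : ℝ × ℝ, ∀ θ : ℝ,
      0 < (S - P θ).1 * (P θ).1 + (S - P θ).2 * (P θ).2 →
      ∃ t : ℝ, q = P θ + t • r θ := by
  rintro ⟨q, hq⟩
  have hd0 : (0:ℝ) < d := by linarith
  -- θ = 0 : line is the x-axis, so q.2 = 0
  obtain ⟨t0, h0⟩ := hq 0 (by simp [hP, hS]; linarith)
  have hq2 : q.2 = 0 := by
    have := congrArg Prod.snd h0
    simp [hr, hv, hP, hS, Prod.smul_def, smul_eq_mul] at this
    simpa using this
  -- key equation for admissible angles
  have key : ∀ c : ℝ, 0 < c → c < 1 → 1 < d * c → q.1 * (2 * d * c - 1) = d := by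
    intro c hc0 hc1 hdc
    set θ := Real.arccos c with hθ
    have hc' : cos θ = c := Real.cos_arccos (by linarith) (by linarith)
    have hsin : sin θ = Real.sqrt (1 - c^2) := by rw [hθ]; exact Real.sin_arccos c
    have hs0 : 0 < sin θ := by
      rw [hsin]; exact Real.sqrt_pos.mpr (by nlinarith)
    have hcs : c^2 + sin θ^2 = 1 := by
      have := sin_sq_add_cos_sq θ; rw [hc'] at this; linarith
    have hadm : 0 < (S - P θ).1 * (P θ).1 + (S - P θ).2 * (P θ).2 := by
      rw [hP, hS, hc']
      simp only [Prod.fst_sub, Prod.snd_sub]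
      nlinarith
    obtain ⟨t, ht⟩ := hq θ hadm
    have h1 := congrArg Prod.fst ht
    have h2 := congrArg Prod.snd ht
    simp only [hr, hv, hP, hS, hc', Prod.fst_sub, Prod.snd_sub, Prod.smul_def,
      smul_eq_mul, Prod.fst_add, Prod.snd_add, Prod.mk_sub_mk, Prod.mk_add_mk] at h1 h2
    rw [hq2] at h2
    exact line_eq_aux d q.1 c (sin θ) t (ne_of_gt hs0) hcs (by linarith [h1]) (by linarith [h2])
  -- two distinct admissible c values
  have hinv : 1/d < 1 := by rw [div_lt_one hd0]; exact hd
  have h1d : d * (1/d) = 1 := mul_one_div_cancel (ne_of_gt hd0)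
  have e1 := key ((1 + 1/d)/2) (by positivity) (by linarith) (by nlinarith [h1d])
  have e2 := key ((3 + 1/d)/4) (by positivity) (by linarith) (by nlinarith [h1d])
  have h2d : q.1 * (d * (1/d)) = q.1 := by rw [h1d]; ring
  have hq1 : q.1 = d := by nlinarith [e1, e2, h2d]
  have hm : q.1 * d = d := by nlinarith [e1, e2, h2d]
  rw [hq1] at hm
  nlinarith [hm]
end

section
/- Ellipse cross-section of the 3D anamorph surface: the set of points at half the distance to the axis along chords of view — concretely, the image of the unit circle under the map sending each point P(θ) = (cos θ, sin θ) (with cos θ > 0) to the tangential image point for a distant observer in direction (1,0), which is Q(θ) = P(θ) − (cos θ/2)·w(θ) where w(θ) = (cos 2θ, sin 2θ) is the reflected-ray direction — this image curve passes through (1/2, 0) at θ = 0 and approaches the circle |Q| = 1 as θ → ±π/2, and lies strictly inside the closed unit disk for all θ ∈ (−π/2, π/2). -/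
open Real

/-- The 3D anamorph surface cross-section: for a distant observer with rays
parallel to `(-1, 0)`, the tangential virtual image of the point reflected at
`P θ = (cos θ, sin θ)` is `Q θ = P θ + (cos θ / 2) • w θ` where
`w θ = (-cos 2θ, -sin 2θ)` is the reflected-ray direction.  Claims:
`Q 0 = (1/2, 0)`; `Q θ` lies strictly inside the unit disk for every
`θ ∈ (-π/2, π/2)`; and `‖Q θ‖ → 1` as `θ → π/2`. -/
theorem anamorph_image_curve
    (P w Q : ℝ → ℝ × ℝ)
    (hP : ∀ θ, P θ = (cos θ, sin θ))
    (hw : ∀ θ, w θ = (-cos (2 * θ), -sin (2 * θ)))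
    (hQ : ∀ θ, Q θ = P θ + (cos θ / 2) • w θ) :
    Q 0 = (1 / 2, 0) ∧
    (∀ θ ∈ Set.Ioo (-(π / 2)) (π / 2), (Q θ).1 ^ 2 + (Q θ).2 ^ 2 < 1) ∧
    Filter.Tendsto (fun θ => Real.sqrt ((Q θ).1 ^ 2 + (Q θ).2 ^ 2))
      (nhds (π / 2)) (nhds 1) := by
  have key : ∀ θ, (Q θ).1 ^ 2 + (Q θ).2 ^ 2 = 1 - 3 / 4 * cos θ ^ 2 := by
    intro θ
    have h1 := sin_sq_add_cos_sq θ
    rw [hQ, hP, hw, cos_two_mul, sin_two_mul]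
    simp [Prod.fst, Prod.snd]
    linear_combination (1 - 2 * cos θ ^ 2 + cos θ ^ 4) * h1
  refine ⟨?_, ?_, ?_⟩
  · rw [hQ, hP, hw]
    norm_num [Prod.ext_iff]
  · intro θ hθ
    rw [key]
    have hc : 0 < cos θ := cos_pos_of_mem_Ioo ⟨hθ.1, hθ.2⟩
    nlinarith
  · have : Filter.Tendsto (fun θ => Real.sqrt (1 - 3 / 4 * cos θ ^ 2))
        (nhds (π / 2)) (nhds 1) := by
      have : Continuous fun θ => Real.sqrt (1 - 3 / 4 * cos θ ^ 2) := by
        continuity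
      have h := this.tendsto (π / 2)
      simpa [cos_pi_div_two] using h
    simpa only [key] using this
end
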